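/- arXiv:2505.00504 — 7 statements merged into one kernel-verified Lean document; each statement's English description precedes it below -/
import Mathlib

section
/- Let G be a graph and S = {x, y, z} ⊆ V(G) with d(x) ≤ d(y) ≤ d(z). If S is a feasible set, then one can delete at most p(S) + q(S) + max{p(S), q(S)} vertices from G (none of them in S) such that in the resulting induced subgraph the three vertices x, y, z all have the same degree, where p(S) = d(z) − d(y) and q(S) = d(y) − d(x). -/
/-!
Write `X`, `Y`, `Z` for the neighbourhoods of `x`, `y`, `z` outside `S = {x, y, z}`. Deleting a
vertex of `(Y \ X) \ Z` lowers only `d(y)`, one of `(Y ∩ Z) \ X` lowers `d(y)` and `d(z)`, one of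
`(Z \ Y) \ X` only `d(z)`, and one of `(Z ∩ X) \ Y` lowers `d(x)` and `d(z)`. Equalising the degrees
is then a small integer problem in the numbers of deletions of each kind, solvable within
`p + q + max p q` deletions once `q ≤ |Y \ X|`, `p ≤ |Z \ Y|` and `p + q ≤ |Z \ X|`. Each of these
inequalities compares how many neighbours two of the vertices have inside `S`: for balanceable `S`
the comparison goes the right way, and for accessible `S` the extra neighbour demanded in
(C5)-(C8) compensates exactly where it does not.
-/

/-- Degree of `v` in `G`. -/
noncomputable def deg {V : Type*} (G : SimpleGraph V) (v : V) : ℕ :=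
  Nat.card ↥(G.neighborSet v)

/-- Degree of `v` in the induced subgraph `G - D` obtained by deleting the vertex set `D`. -/
noncomputable def delDeg {V : Type*} (G : SimpleGraph V) (D : Finset V) (v : V) : ℕ :=
  Nat.card ↥(G.neighborSet v \ ↑D)
/-- `{x,y,z}` with `deg x ≤ deg y ≤ deg z` is balanceable: (C1)-(C4). -/
def Balanceable {V : Type*} (G : SimpleGraph V) (x y z : V) : Prop :=
  (¬G.Adj x y ∧ ¬G.Adj x z ∧ ¬G.Adj y z) ∨
  (G.Adj x y ∧ G.Adj x z ∧ G.Adj y z) ∨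
  (G.Adj x y ∧ ¬G.Adj x z ∧ ¬G.Adj y z) ∨
  (G.Adj x y ∧ G.Adj x z ∧ ¬G.Adj y z)

/-- `{x,y,z}` with `deg x ≤ deg y ≤ deg z` is accessible: (C5)-(C8). -/
def Accessible {V : Type*} (G : SimpleGraph V) (x y z : V) : Prop :=
  (¬G.Adj x y ∧ G.Adj x z ∧ ¬G.Adj y z ∧
    (G.neighborSet y \ G.neighborSet z).Nonempty) ∨
  (G.Adj x y ∧ ¬G.Adj x z ∧ G.Adj y z ∧
    (G.neighborSet x \ insert y (G.neighborSet y)).Nonempty) ∨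
  (¬G.Adj x y ∧ ¬G.Adj x z ∧ G.Adj y z ∧
    (G.neighborSet x \ G.neighborSet y).Nonempty ∧
    (G.neighborSet x \ G.neighborSet z).Nonempty) ∨
  (¬G.Adj x y ∧ G.Adj x z ∧ G.Adj y z ∧
    (G.neighborSet x \ insert z (G.neighborSet z)).Nonempty ∧
    (G.neighborSet y \ insert z (G.neighborSet z)).Nonempty)

/-- Feasible = balanceable or accessible. -/
def Feasible {V : Type*} (G : SimpleGraph V) (x y z : V) : Prop :=
  Balanceable G x y z ∨ Accessible G x y z

open Finset

/- Either the `q` extra deletions at `y` are taken as far as possible from `F`, where they also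
count for `z`, and `z` is topped up from `C`; or, when `C` is too small for that, all of `C` is
used and the remaining deficit of `z` is covered through `E` and `F`. -/
theorem exists_balancing_counts {B C E F p q : ℕ} (hq : q ≤ B + F) (hp : p ≤ C + E)
    (hpq : p + q ≤ C + F) :
    ∃ b c e f, b ≤ B ∧ c ≤ C ∧ e ≤ E ∧ f ≤ F ∧ b + f = q + e ∧ c + e = p + b ∧
      b + c + e + f ≤ p + q + max p q := by
  rcases le_or_gt (p + q) (C + min q F) with h | h
  · exact ⟨q - min q F, p + q - min q F, 0, min q F, by omega, by omega, by omega, by omega,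
      by omega, by omega, by omega⟩
  · exact ⟨0, C, p - C, q + (p - C), by omega, by omega, by omega, by omega, by omega,
      by omega, by omega⟩

theorem Finset.exists_subset_card_inter_eq {α : Type*} [DecidableEq α] (X Y Z : Finset α)
    {p q : ℕ} (hq : q ≤ #(Y \ X)) (hp : p ≤ #(Z \ Y)) (hpq : p + q ≤ #(Z \ X)) :
    ∃ D ⊆ Y ∪ Z, #D ≤ p + q + max p q ∧ #(Y ∩ D) = q + #(X ∩ D) ∧
      #(Z ∩ D) = p + #(Y ∩ D) := by
  have hYX : #((Y \ X) \ Z) + #((Y \ X) ∩ Z) = #(Y \ X) := card_sdiff_add_card_inter _ _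
  have hZY : #((Z \ Y) \ X) + #((Z \ Y) ∩ X) = #(Z \ Y) := card_sdiff_add_card_inter _ _
  have hZX : #((Z \ Y) \ X) + #((Y \ X) ∩ Z) = #(Z \ X) := by
    rw [← card_sdiff_add_card_inter (Z \ X) Y]
    congr 2 <;> grind
  obtain ⟨b, c, e, f, hbB, hcC, heE, hfF, hy, hz, hsum⟩ := exists_balancing_counts
    (hYX ▸ hq) (hZY ▸ hp) (hZX ▸ hpq)
  obtain ⟨Db, hDb, rfl⟩ := exists_subset_card_eq hbB
  obtain ⟨Dc, hDc, rfl⟩ := exists_subset_card_eq hcC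
  obtain ⟨De, hDe, rfl⟩ := exists_subset_card_eq heE
  obtain ⟨Df, hDf, rfl⟩ := exists_subset_card_eq hfF
  have hX : X ∩ (Db ∪ Dc ∪ De ∪ Df) = De := by grind
  have hY : Y ∩ (Db ∪ Dc ∪ De ∪ Df) = Db ∪ Df := by grind
  have hZ : Z ∩ (Db ∪ Dc ∪ De ∪ Df) = Dc ∪ De ∪ Df := by grind
  have hbf : Disjoint Db Df := by grind [disjoint_left]
  have hce : Disjoint Dc De := by grind [disjoint_left]
  have hcef : Disjoint (Dc ∪ De) Df := by grind [disjoint_left]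
  refine ⟨Db ∪ Dc ∪ De ∪ Df, ?_, ?_, ?_, ?_⟩
  · grind
  · calc #(Db ∪ Dc ∪ De ∪ Df) ≤ #Db + #Dc + #De + #Df := by
          grw [card_union_le, card_union_le, card_union_le]
      _ ≤ p + q + max p q := hsum
  · rw [hX, hY, card_union_of_disjoint hbf, hy]
  · rw [hY, hZ, card_union_of_disjoint hbf, card_union_of_disjoint hcef,
      card_union_of_disjoint hce]
    omega

section
variable {V : Type*} (G : SimpleGraph V)

theorem nonempty_sdiff_insert_of_not_adj {u v : V} (huv : ¬G.Adj u v)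
    (h : (G.neighborSet u \ G.neighborSet v).Nonempty) :
    (G.neighborSet u \ insert v (G.neighborSet v)).Nonempty := by
  obtain ⟨w, hwu, hwv⟩ := h
  exact ⟨w, hwu, by rintro (rfl | hw) <;> tauto⟩

variable [G.LocallyFinite]

theorem deg_eq_card_neighborFinset (v : V) : deg G v = #(G.neighborFinset v) := by
  rw [deg, Nat.card_eq_card_toFinset, G.neighborFinset_def]

theorem delDeg_add_card_inter [DecidableEq V] (D : Finset V) (v : V) :
    delDeg G D v + #(G.neighborFinset v ∩ D) = deg G v := by
  have : G.neighborSet v \ ↑D = ↑(G.neighborFinset v \ D) := by ext; simp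
  rw [delDeg, this, Nat.card_eq_card_toFinset, toFinset_coe, deg_eq_card_neighborFinset,
    card_sdiff_add_card_inter]

theorem card_neighborFinset_inter [DecidableEq V] [DecidableRel G.Adj] (u : V) (S : Finset V) :
    #(G.neighborFinset u ∩ S) = ∑ s ∈ S, if G.Adj u s then 1 else 0 := by
  rw [← card_filter]; congr 1; ext; simp [and_comm]

theorem deg_le_add_card_sdiff_of_card_inter_le [DecidableEq V] (S : Finset V) {u v : V}
    (h : #(G.neighborFinset v ∩ S) ≤
      #(G.neighborFinset u ∩ S) + #((G.neighborFinset u \ S) \ (G.neighborFinset v \ S))) :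
    deg G v ≤ deg G u + #((G.neighborFinset v \ S) \ (G.neighborFinset u \ S)) := by
  have hu := card_sdiff_add_card_inter (G.neighborFinset u) S
  have hv := card_sdiff_add_card_inter (G.neighborFinset v) S
  have huv := card_sdiff_add_card (G.neighborFinset u \ S) (G.neighborFinset v \ S)
  have hvu := card_sdiff_add_card (G.neighborFinset v \ S) (G.neighborFinset u \ S)
  rw [union_comm] at hvu
  rw [deg_eq_card_neighborFinset, deg_eq_card_neighborFinset]
  omega

theorem one_le_card_sdiff_sdiff [DecidableEq V] {S : Finset V} {u v t : V}
    (hS : S ⊆ {u, v, t}) (hut : ¬G.Adj u t)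
    (h : (G.neighborSet u \ insert v (G.neighborSet v)).Nonempty) :
    1 ≤ #((G.neighborFinset u \ S) \ (G.neighborFinset v \ S)) := by
  obtain ⟨w, hwu, hwv⟩ := h
  rw [Set.mem_insert_iff, not_or] at hwv
  have hwS : w ∉ S := fun hw => by
    rcases mem_insert.1 (hS hw) with rfl | hw
    · exact G.irrefl hwu
    rcases mem_insert.1 hw with rfl | hw
    · exact hwv.1 rfl
    · exact hut (mem_singleton.1 hw ▸ hwu)
  exact one_le_card.2 ⟨w, by simp_all⟩

theorem card_neighborFinset_inter_triple [DecidableEq V] [DecidableRel G.Adj] {x y z : V}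
    (hxy : x ≠ y) (hxz : x ≠ z) (hyz : y ≠ z) (u : V) :
    #(G.neighborFinset u ∩ {x, y, z}) =
      (if G.Adj u x then 1 else 0) + (if G.Adj u y then 1 else 0) +
        (if G.Adj u z then 1 else 0) := by
  rw [card_neighborFinset_inter, sum_insert (by simp [hxy, hxz]), sum_insert (by simp [hyz]),
    sum_singleton, add_assoc]

theorem Feasible.deg_le_add_card_sdiff [DecidableEq V] {x y z : V}
    (hxy : x ≠ y) (hxz : x ≠ z) (hyz : y ≠ z) (hf : Feasible G x y z) :
    deg G y ≤ deg G x +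
      #((G.neighborFinset y \ {x, y, z}) \ (G.neighborFinset x \ {x, y, z})) ∧
    deg G z ≤ deg G y +
      #((G.neighborFinset z \ {x, y, z}) \ (G.neighborFinset y \ {x, y, z})) ∧
    deg G z ≤ deg G x +
      #((G.neighborFinset z \ {x, y, z}) \ (G.neighborFinset x \ {x, y, z})) := by
  classical
  have witness {u v t : V} (hS : ({x, y, z} : Finset V) ⊆ {u, v, t}) (hut : ¬G.Adj u t)
      (h : (G.neighborSet u \ insert v (G.neighborSet v)).Nonempty) :=
    one_le_card_sdiff_sdiff G hS hut h
  rcases hf with (⟨axy, axz, ayz⟩ | ⟨axy, axz, ayz⟩ | ⟨axy, axz, ayz⟩ | ⟨axy, axz, ayz⟩) |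
    (⟨axy, axz, ayz, hw⟩ | ⟨axy, axz, ayz, hw⟩ | ⟨axy, axz, ayz, hw, hw'⟩ |
      ⟨axy, axz, ayz, hw, hw'⟩) <;>
  refine ⟨deg_le_add_card_sdiff_of_card_inter_le G _ ?_,
    deg_le_add_card_sdiff_of_card_inter_le G _ ?_,
    deg_le_add_card_sdiff_of_card_inter_le G _ ?_⟩ <;>
  simp only [card_neighborFinset_inter_triple G hxy hxz hyz, G.adj_comm y x, G.adj_comm z x,
    G.adj_comm z y, G.irrefl, axy, axz, ayz, if_true, if_false] <;>
  try omega
  -- What is left are the inequalities that need the extra neighbour of (C5)-(C8).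
  · have := witness (t := x) (by grind) (mt G.adj_symm axy)
      (nonempty_sdiff_insert_of_not_adj G ayz hw)
    omega
  · have := witness (t := z) (by grind) axz hw
    omega
  · have := witness (t := z) (by grind) axz (nonempty_sdiff_insert_of_not_adj G axy hw)
    omega
  · have := witness (t := y) (by grind) axy (nonempty_sdiff_insert_of_not_adj G axz hw')
    omega
  · have := witness (t := x) (by grind) (mt G.adj_symm axy) hw'
    omega
  · have := witness (t := y) (by grind) axy hw
    omega

end

/-- If `S = {x,y,z}` with `d(x) ≤ d(y) ≤ d(z)` is feasible, one can delete at most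
`p(S) + q(S) + max{p(S), q(S)}` vertices (none in `S`) to equate the degrees of `x, y, z`. -/
theorem stmt_2 {V : Type*} [Fintype V] (G : SimpleGraph V) (x y z : V)
    (hxy : x ≠ y) (hxz : x ≠ z) (hyz : y ≠ z)
    (h1 : deg G x ≤ deg G y) (h2 : deg G y ≤ deg G z)
    (hf : Feasible G x y z) :
    ∃ D : Finset V,
      D.card ≤ (deg G z - deg G y) + (deg G y - deg G x) +
        max (deg G z - deg G y) (deg G y - deg G x) ∧
      x ∉ D ∧ y ∉ D ∧ z ∉ D ∧
      delDeg G D x = delDeg G D y ∧ delDeg G D y = delDeg G D z := by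
  classical
  obtain ⟨hyx, hzy, hzx⟩ := Feasible.deg_le_add_card_sdiff G hxy hxz hyz hf
  set S : Finset V := {x, y, z}
  obtain ⟨D, hDsub, hcard, hyD, hzD⟩ := Finset.exists_subset_card_inter_eq
    (G.neighborFinset x \ S) (G.neighborFinset y \ S) (G.neighborFinset z \ S)
    (p := deg G z - deg G y) (q := deg G y - deg G x) (by omega) (by omega) (by omega)
  have hDS : x ∉ D ∧ y ∉ D ∧ z ∉ D := by grind
  have hdel (v : V) : delDeg G D v + #((G.neighborFinset v \ S) ∩ D) = deg G v := by
    rw [← delDeg_add_card_inter G D v]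
    congr 2
    grind
  have hx := hdel x; have hy := hdel y; have hz := hdel z
  exact ⟨D, hcard, hDS.1, hDS.2.1, hDS.2.2, by omega, by omega⟩
end

section
/- Let G be a graph and X = {v1, v2, v3, v4} ⊆ V(G) with d(v1) ≤ d(v2) ≤ d(v3) ≤ d(v4). If no 3-element subset of X is balanceable, then G[X] is an induced path on 4 vertices whose two endpoints are v1 and v2. -/
/-
Among the graphs on three vertices `x, y, z` with `d(x) ≤ d(y) ≤ d(z)`, the non-balanceable ones
are the single edges `xz` or `yz` and the paths centred at `y` or at `z`. Running through the
`2 ^ 6` graphs on `X`, the only ones in which all four triples are of this kind are the paths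
`v1 – v3 – v4 – v2` and `v1 – v4 – v3 – v2`.
-/

lemma induced_path_of_not_balanceable {V : Type*} (G : SimpleGraph V) (v1 v2 v3 v4 : V)
    (h123 : ¬Balanceable G v1 v2 v3) (h124 : ¬Balanceable G v1 v2 v4)
    (h134 : ¬Balanceable G v1 v3 v4) (h234 : ¬Balanceable G v2 v3 v4) :
    (G.Adj v1 v3 ∧ G.Adj v3 v4 ∧ G.Adj v4 v2 ∧ ¬G.Adj v1 v2 ∧ ¬G.Adj v1 v4 ∧ ¬G.Adj v3 v2) ∨
      (G.Adj v1 v4 ∧ G.Adj v4 v3 ∧ G.Adj v3 v2 ∧ ¬G.Adj v1 v2 ∧ ¬G.Adj v1 v3 ∧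
        ¬G.Adj v4 v2) := by
  unfold Balanceable at *
  by_cases G.Adj v1 v2 <;> by_cases G.Adj v1 v3 <;> by_cases G.Adj v1 v4 <;>
    by_cases G.Adj v2 v3 <;> by_cases G.Adj v2 v4 <;> by_cases G.Adj v3 v4 <;>
    simp_all [G.adj_comm]

theorem stmt_3_general {V : Type*} (G : SimpleGraph V) (v1 v2 v3 v4 : V)
    (hdist : [v1, v2, v3, v4].Pairwise (· ≠ ·))
    (h12 : deg G v1 ≤ deg G v2) (h23 : deg G v2 ≤ deg G v3) (h34 : deg G v3 ≤ deg G v4)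
    (hnb : ∀ x y z : V, x ∈ ({v1, v2, v3, v4} : Set V) → y ∈ ({v1, v2, v3, v4} : Set V) →
      z ∈ ({v1, v2, v3, v4} : Set V) → x ≠ y → x ≠ z → y ≠ z →
      deg G x ≤ deg G y → deg G y ≤ deg G z → ¬ Balanceable G x y z) :
    ∃ a b : V, ({a, b} : Set V) = {v3, v4} ∧
      G.Adj v1 a ∧ G.Adj a b ∧ G.Adj b v2 ∧
      ¬G.Adj v1 v2 ∧ ¬G.Adj v1 b ∧ ¬G.Adj a v2 := by
  obtain ⟨⟨n12, n13, n14⟩, ⟨n23, n24⟩, n34⟩ : (v1 ≠ v2 ∧ v1 ≠ v3 ∧ v1 ≠ v4) ∧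
      (v2 ≠ v3 ∧ v2 ≠ v4) ∧ v3 ≠ v4 := by
    simpa using hdist
  have h123 := hnb v1 v2 v3 (by simp) (by simp) (by simp) n12 n13 n23 h12 h23
  have h124 := hnb v1 v2 v4 (by simp) (by simp) (by simp) n12 n14 n24 h12 (h23.trans h34)
  have h134 := hnb v1 v3 v4 (by simp) (by simp) (by simp) n13 n14 n34 (h12.trans h23) h34
  have h234 := hnb v2 v3 v4 (by simp) (by simp) (by simp) n23 n24 n34 h23 h34
  rcases induced_path_of_not_balanceable G v1 v2 v3 v4 h123 h124 h134 h234 with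
    ⟨e13, e34, e42, n12, n14, n32⟩ | ⟨e14, e43, e32, n12, n13, n42⟩
  · exact ⟨v3, v4, rfl, e13, e34, e42, n12, n14, n32⟩
  · exact ⟨v4, v3, Set.pair_comm v4 v3, e14, e43, e32, n12, n13, n42⟩

/-- If `X = {v1,v2,v3,v4}` with `d(v1) ≤ d(v2) ≤ d(v3) ≤ d(v4)` contains no balanceable
3-subset, then `G[X]` is an induced path on 4 vertices with endpoints `v1` and `v2`. -/
theorem stmt_3 {V : Type*} [Fintype V] (G : SimpleGraph V) (v1 v2 v3 v4 : V)
    (hdist : [v1, v2, v3, v4].Pairwise (· ≠ ·))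
    (h12 : deg G v1 ≤ deg G v2) (h23 : deg G v2 ≤ deg G v3) (h34 : deg G v3 ≤ deg G v4)
    (hnb : ∀ x y z : V, x ∈ ({v1, v2, v3, v4} : Set V) → y ∈ ({v1, v2, v3, v4} : Set V) →
      z ∈ ({v1, v2, v3, v4} : Set V) → x ≠ y → x ≠ z → y ≠ z →
      deg G x ≤ deg G y → deg G y ≤ deg G z → ¬ Balanceable G x y z) :
    ∃ a b : V, ({a, b} : Set V) = {v3, v4} ∧
      G.Adj v1 a ∧ G.Adj a b ∧ G.Adj b v2 ∧
      ¬G.Adj v1 v2 ∧ ¬G.Adj v1 b ∧ ¬G.Adj a v2 :=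
  stmt_3_general G v1 v2 v3 v4 hdist h12 h23 h34 hnb
end

section
/- Let G be a graph and U = {u1, u2, u3, u4, u5} ⊆ V(G) with d(u1) ≤ d(u2) ≤ d(u3) ≤ d(u4) ≤ d(u5). Then there exists a feasible 3-element subset S ⊆ U with u3 ∈ S. -/
/-!
Balanceability alone suffices. If `{u1, u2, u3}` is not balanceable, then `u3` has a neighbour
`w ∈ {u1, u2}`. With the edge `w u3` present, `{w, u3, u4}` and `{w, u3, u5}` can fail to be
balanceable only if `u3` is adjacent to both `u4` and `u5`, and then `{u3, u4, u5}` is balanceable.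
-/

section Balanceable

variable {V : Type*} (G : SimpleGraph V) {x y z : V}

lemma balanceable_of_adj_of_adj (hxy : G.Adj x y) (hxz : G.Adj x z) : Balanceable G x y z := by
  unfold Balanceable; tauto

lemma adj_or_adj_of_not_balanceable (h : ¬Balanceable G x y z) : G.Adj x z ∨ G.Adj y z := by
  unfold Balanceable at h; tauto

lemma adj_of_adj_of_not_balanceable (hxy : G.Adj x y) (h : ¬Balanceable G x y z) :
    G.Adj y z := by
  unfold Balanceable at h; tauto

lemma balanceable_of_adj (w : V) (hxw : G.Adj x w) :
    Balanceable G x w y ∨ Balanceable G x w z ∨ Balanceable G w y z := by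
  by_cases hy : Balanceable G x w y
  · exact .inl hy
  by_cases hz : Balanceable G x w z
  · exact .inr (.inl hz)
  exact .inr (.inr (balanceable_of_adj_of_adj G (adj_of_adj_of_not_balanceable G hxw hy)
    (adj_of_adj_of_not_balanceable G hxw hz)))

lemma balanceable_triple_of_five (a b c d e : V) :
    Balanceable G a b c ∨ Balanceable G a c d ∨ Balanceable G a c e ∨
      Balanceable G b c d ∨ Balanceable G b c e ∨ Balanceable G c d e := by
  by_cases habc : Balanceable G a b c
  · exact .inl habc
  rcases adj_or_adj_of_not_balanceable G habc with hac | hbc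
  · rcases balanceable_of_adj G (y := d) (z := e) c hac with h | h | h <;> tauto
  · rcases balanceable_of_adj G (y := d) (z := e) c hbc with h | h | h <;> tauto

end Balanceable

theorem stmt_4_general {V : Type*} (G : SimpleGraph V) (u1 u2 u3 u4 u5 : V)
    (hdist : [u1, u2, u3, u4, u5].Pairwise (· ≠ ·))
    (h12 : deg G u1 ≤ deg G u2) (h23 : deg G u2 ≤ deg G u3)
    (h34 : deg G u3 ≤ deg G u4) (h45 : deg G u4 ≤ deg G u5) :
    ∃ x y z : V, x ∈ ({u1, u2, u3, u4, u5} : Set V) ∧ y ∈ ({u1, u2, u3, u4, u5} : Set V) ∧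
      z ∈ ({u1, u2, u3, u4, u5} : Set V) ∧ x ≠ y ∧ x ≠ z ∧ y ≠ z ∧
      u3 ∈ ({x, y, z} : Set V) ∧ deg G x ≤ deg G y ∧ deg G y ≤ deg G z ∧
      Feasible G x y z := by
  simp only [List.pairwise_cons, List.mem_cons, List.not_mem_nil,
    forall_eq_or_imp] at hdist
  obtain ⟨⟨n12, n13, n14, n15, -⟩, ⟨n23, n24, n25, -⟩, ⟨n34, n35, -⟩, ⟨n45, -⟩, -⟩ := hdist
  rcases balanceable_triple_of_five G u1 u2 u3 u4 u5 with h | h | h | h | h | h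
  · exact ⟨u1, u2, u3, by simp, by simp, by simp, n12, n13, n23, by simp, h12, h23, .inl h⟩
  · exact ⟨u1, u3, u4, by simp, by simp, by simp, n13, n14, n34, by simp, h12.trans h23, h34,
      .inl h⟩
  · exact ⟨u1, u3, u5, by simp, by simp, by simp, n13, n15, n35, by simp, h12.trans h23,
      h34.trans h45, .inl h⟩
  · exact ⟨u2, u3, u4, by simp, by simp, by simp, n23, n24, n34, by simp, h23, h34, .inl h⟩
  · exact ⟨u2, u3, u5, by simp, by simp, by simp, n23, n25, n35, by simp, h23, h34.trans h45,
      .inl h⟩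
  · exact ⟨u3, u4, u5, by simp, by simp, by simp, n34, n35, n45, by simp, h34, h45, .inl h⟩

/-- Among five vertices `u1, ..., u5` with `d(u1) ≤ ... ≤ d(u5)` there is a feasible
3-element subset containing `u3`. -/
theorem stmt_4 {V : Type*} [Fintype V] (G : SimpleGraph V) (u1 u2 u3 u4 u5 : V)
    (hdist : [u1, u2, u3, u4, u5].Pairwise (· ≠ ·))
    (h12 : deg G u1 ≤ deg G u2) (h23 : deg G u2 ≤ deg G u3)
    (h34 : deg G u3 ≤ deg G u4) (h45 : deg G u4 ≤ deg G u5) :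
    ∃ x y z : V, x ∈ ({u1, u2, u3, u4, u5} : Set V) ∧ y ∈ ({u1, u2, u3, u4, u5} : Set V) ∧
      z ∈ ({u1, u2, u3, u4, u5} : Set V) ∧ x ≠ y ∧ x ≠ z ∧ y ≠ z ∧
      u3 ∈ ({x, y, z} : Set V) ∧ deg G x ≤ deg G y ∧ deg G y ≤ deg G z ∧
      Feasible G x y z :=
  stmt_4_general G u1 u2 u3 u4 u5 hdist h12 h23 h34 h45
end

section
/- Let G be a graph, d ≥ 1, and v1, v2, v3 distinct vertices with d(v1) = d(v2) = d and d(v3) = d + 2 such that {v1, v2, v3} is balanceable. If there exists a vertex v ∈ N(v3) \ (N[v1] ∪ N[v2]), then one can delete at most 3 vertices from G so that three vertices in the resulting induced subgraph share the same degree. -/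
open Finset

theorem Balanceable.adj_of_adj_left {V : Type*} {G : SimpleGraph V} {x y z : V}
    (h : Balanceable G x y z) (hxz : G.Adj x z) : G.Adj x y := by
  unfold Balanceable at h
  tauto

theorem Balanceable.adj_of_adj_right {V : Type*} {G : SimpleGraph V} {x y z : V}
    (h : Balanceable G x y z) (hyz : G.Adj y z) : G.Adj x y := by
  unfold Balanceable at h
  tauto

namespace SimpleGraph

variable {V : Type*} (G : SimpleGraph V)

def ThreeEqualDegreesAfterDeleting (k : ℕ) : Prop :=
  ∃ D : Finset V, #D ≤ k ∧ ∃ x y z : V, x ∉ D ∧ y ∉ D ∧ z ∉ D ∧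
    x ≠ y ∧ x ≠ z ∧ y ≠ z ∧
    delDeg G D x = delDeg G D y ∧ delDeg G D y = delDeg G D z

theorem deg_eq_degree (u : V) [Fintype (G.neighborSet u)] : deg G u = G.degree u := by
  rw [deg, Nat.card_eq_fintype_card, card_neighborSet_eq_degree]

variable [Fintype V] [DecidableRel G.Adj]

theorem delDeg_add_card_inter [DecidableEq V] (D : Finset V) (u : V) :
    delDeg G D u + #(G.neighborFinset u ∩ D) = deg G u := by
  have hset : G.neighborSet u \ ↑D = ↑(G.neighborFinset u \ D) := by simp
  rw [delDeg, hset, Nat.card_coe_set_eq, Set.ncard_coe_finset, card_sdiff_add_card_inter,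
    deg_eq_degree, card_neighborFinset_eq_degree]

variable {G}

theorem threeEqualDegreesAfterDeleting_of_card_inter [DecidableEq V] {k : ℕ} {D : Finset V}
    (hD : #D ≤ k) {x y z : V} (hx : x ∉ D) (hy : y ∉ D) (hz : z ∉ D)
    (hxy : x ≠ y) (hxz : x ≠ z) (hyz : y ≠ z)
    (hdxy : deg G x + #(G.neighborFinset y ∩ D) = deg G y + #(G.neighborFinset x ∩ D))
    (hdyz : deg G y + #(G.neighborFinset z ∩ D) = deg G z + #(G.neighborFinset y ∩ D)) :
    G.ThreeEqualDegreesAfterDeleting k := by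
  have := delDeg_add_card_inter G D x
  have := delDeg_add_card_inter G D y
  have := delDeg_add_card_inter G D z
  exact ⟨D, hD, x, y, z, hx, hy, hz, hxy, hxz, hyz, by omega, by omega⟩

theorem exists_adj_not_adj_of_deg {d : ℕ} {x y z v : V} (hyz : G.Adj y z → G.Adj x y)
    (hzv : G.Adj z v) (hx : deg G x = d) (hz : deg G z = d + 2) :
    ∃ c, G.Adj z c ∧ ¬G.Adj x c ∧ c ≠ v ∧ c ≠ x ∧ c ≠ y := by
  classical
  -- Otherwise `N(z) \ {v, x} ⊆ N(x) \ {z}`, which is too small whether or not `x ~ z`.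
  by_contra hT
  have hsub : ((G.neighborFinset z).erase v).erase x ⊆ (G.neighborFinset x).erase z := by
    intro c hc
    simp only [mem_erase, mem_neighborFinset] at hc ⊢
    obtain ⟨hcx, hcv, hzc⟩ := hc
    refine ⟨hzc.ne', ?_⟩
    by_cases hcy : c = y
    · subst hcy
      exact hyz hzc.symm
    · by_contra hxc
      exact hT ⟨c, hzc, hxc, hcv, hcx, hcy⟩
  have hle := card_le_card hsub
  rw [deg_eq_degree, ← card_neighborFinset_eq_degree] at hx hz
  have hv := card_erase_add_one ((mem_neighborFinset G z v).2 hzv)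
  by_cases hxz : G.Adj x z
  · have := card_erase_add_one ((mem_neighborFinset G x z).2 hxz)
    have := pred_card_le_card_erase (s := (G.neighborFinset z).erase v) (a := x)
    omega
  · have hx' : x ∉ (G.neighborFinset z).erase v := fun h =>
      hxz ((mem_neighborFinset G z x).1 (mem_of_mem_erase h)).symm
    have := card_erase_le (s := G.neighborFinset x) (a := z)
    rw [erase_eq_of_notMem hx'] at hle
    omega

variable [DecidableEq V] {d : ℕ} {x y z v : V}

theorem threeEqualDegreesAfterDeleting_of_two_common_nonneighbors {w : V}
    (hxy : x ≠ y) (hxz : x ≠ z) (hyz : y ≠ z)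
    (hx : deg G x = d) (hy : deg G y = d) (hz : deg G z = d + 2)
    (hzv : G.Adj z v) (hxv : ¬G.Adj x v) (hyv : ¬G.Adj y v) (hvx : v ≠ x) (hvy : v ≠ y)
    (hzw : G.Adj z w) (hxw : ¬G.Adj x w) (hyw : ¬G.Adj y w) (hwx : w ≠ x) (hwy : w ≠ y)
    (hvw : v ≠ w) :
    G.ThreeEqualDegreesAfterDeleting 3 := by
  have hNx : G.neighborFinset x ∩ {v, w} = ∅ := by simp [inter_insert_of_notMem, *]
  have hNy : G.neighborFinset y ∩ {v, w} = ∅ := by simp [inter_insert_of_notMem, *]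
  have hNz : G.neighborFinset z ∩ {v, w} = {v, w} := by simp [hzv, hzw]
  refine threeEqualDegreesAfterDeleting_of_card_inter (D := {v, w})
    (card_le_two.trans (by norm_num)) ?_ ?_ ?_ hxy hxz hyz ?_ ?_
  · simp [hvx.symm, hwx.symm]
  · simp [hvy.symm, hwy.symm]
  · simp [hzv.ne, hzw.ne]
  · rw [hNx, hNy, hx, hy]
  · rw [hNy, hNz, card_pair hvw, card_empty, hy, hz]

theorem threeEqualDegreesAfterDeleting_of_crossing_neighbors {b c : V}
    (hxy : x ≠ y) (hxz : x ≠ z) (hyz : y ≠ z)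
    (hx : deg G x = d) (hy : deg G y = d) (hz : deg G z = d + 2)
    (hzv : G.Adj z v) (hxv : ¬G.Adj x v) (hyv : ¬G.Adj y v) (hvx : v ≠ x) (hvy : v ≠ y)
    (hzb : G.Adj z b) (hxb : G.Adj x b) (hyb : ¬G.Adj y b) (hbx : b ≠ x) (hby : b ≠ y)
    (hzc : G.Adj z c) (hxc : ¬G.Adj x c) (hyc : G.Adj y c) (hcx : c ≠ x) (hcy : c ≠ y)
    (hvb : v ≠ b) (hvc : v ≠ c) :
    G.ThreeEqualDegreesAfterDeleting 3 := by
  have hbc : b ≠ c := by rintro rfl; exact hxc hxb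
  have hNx : G.neighborFinset x ∩ {v, b, c} = {b} := by
    simp [inter_insert_of_notMem, inter_insert_of_mem, *]
  have hNy : G.neighborFinset y ∩ {v, b, c} = {c} := by
    simp [inter_insert_of_notMem, *]
  have hNz : G.neighborFinset z ∩ {v, b, c} = {v, b, c} := by simp [hzv, hzb, hzc]
  refine threeEqualDegreesAfterDeleting_of_card_inter (D := {v, b, c}) card_le_three
    ?_ ?_ ?_ hxy hxz hyz ?_ ?_
  · simp [hvx.symm, hbx.symm, hcx.symm]
  · simp [hvy.symm, hby.symm, hcy.symm]
  · simp [hzv.ne, hzb.ne, hzc.ne]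
  · rw [hNx, hNy, card_singleton, card_singleton, hx, hy]
  · rw [hNy, hNz, card_eq_three.2 ⟨v, b, c, hvb, hvc, hbc, rfl⟩, hy, hz]
    simp

theorem threeEqualDegreesAfterDeleting_of_private_neighbor
    (hxy : x ≠ y) (hxz : x ≠ z) (hyz : y ≠ z)
    (hx : deg G x = d) (hy : deg G y = d) (hz : deg G z = d + 2)
    (hzv : G.Adj z v) (hxv : ¬G.Adj x v) (hyv : ¬G.Adj y v) (hvx : v ≠ x) (hvy : v ≠ y)
    (hxz_adj : G.Adj x z → G.Adj x y) (hyz_adj : G.Adj y z → G.Adj x y) :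
    G.ThreeEqualDegreesAfterDeleting 3 := by
  obtain ⟨c, hzc, hxc, hcv, hcx, hcy⟩ := exists_adj_not_adj_of_deg hyz_adj hzv hx hz
  obtain ⟨b, hzb, hyb, hbv, hby, hbx⟩ :=
    exists_adj_not_adj_of_deg (x := y) (y := x) (fun h => (hxz_adj h).symm) hzv hy hz
  by_cases hxb : G.Adj x b
  · by_cases hyc : G.Adj y c
    · exact threeEqualDegreesAfterDeleting_of_crossing_neighbors hxy hxz hyz hx hy hz
        hzv hxv hyv hvx hvy hzb hxb hyb hbx hby hzc hxc hyc hcx hcy hbv.symm hcv.symm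
    · exact threeEqualDegreesAfterDeleting_of_two_common_nonneighbors hxy hxz hyz hx hy hz
        hzv hxv hyv hvx hvy hzc hxc hyc hcx hcy hcv.symm
  · exact threeEqualDegreesAfterDeleting_of_two_common_nonneighbors hxy hxz hyz hx hy hz
      hzv hxv hyv hvx hvy hzb hxb hyb hbx hby hbv.symm

end SimpleGraph

theorem stmt_6_general {V : Type*} [Fintype V] (G : SimpleGraph V) (d : ℕ)
    (v1 v2 v3 : V) (h12 : v1 ≠ v2) (h13 : v1 ≠ v3) (h23 : v2 ≠ v3)
    (hdeg1 : deg G v1 = d) (hdeg2 : deg G v2 = d) (hdeg3 : deg G v3 = d + 2)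
    (hbal : Balanceable G v1 v2 v3)
    (hv : ∃ v : V, v ∈ G.neighborSet v3 \
      (insert v1 (G.neighborSet v1) ∪ insert v2 (G.neighborSet v2))) :
    ∃ D : Finset V, D.card ≤ 3 ∧ ∃ x y z : V, x ∉ D ∧ y ∉ D ∧ z ∉ D ∧
      x ≠ y ∧ x ≠ z ∧ y ≠ z ∧
      delDeg G D x = delDeg G D y ∧ delDeg G D y = delDeg G D z := by
  classical
  obtain ⟨v, hzv, hv⟩ := hv
  simp only [Set.mem_union, Set.mem_insert_iff, SimpleGraph.mem_neighborSet, not_or] at hzv hv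
  obtain ⟨⟨hv1, h1v⟩, hv2, h2v⟩ := hv
  exact SimpleGraph.threeEqualDegreesAfterDeleting_of_private_neighbor h12 h13 h23
    hdeg1 hdeg2 hdeg3 hzv h1v h2v hv1 hv2 hbal.adj_of_adj_left hbal.adj_of_adj_right

/-- Claim 1 with the deletion lemma: if `{v1,v2,v3}` is balanceable with
`d(v1) = d(v2) = d ≥ 1`, `d(v3) = d + 2`, and some `v ∈ N(v3) \ (N[v1] ∪ N[v2])` exists,
then one can delete at most 3 vertices to make three vertices share the same degree. -/
theorem stmt_6 {V : Type*} [Fintype V] (G : SimpleGraph V) (d : ℕ) (hd : 1 ≤ d)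
    (v1 v2 v3 : V) (h12 : v1 ≠ v2) (h13 : v1 ≠ v3) (h23 : v2 ≠ v3)
    (hdeg1 : deg G v1 = d) (hdeg2 : deg G v2 = d) (hdeg3 : deg G v3 = d + 2)
    (hbal : Balanceable G v1 v2 v3)
    (hv : ∃ v : V, v ∈ G.neighborSet v3 \
      (insert v1 (G.neighborSet v1) ∪ insert v2 (G.neighborSet v2))) :
    ∃ D : Finset V, D.card ≤ 3 ∧ ∃ x y z : V, x ∉ D ∧ y ∉ D ∧ z ∉ D ∧
      x ≠ y ∧ x ≠ z ∧ y ≠ z ∧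
      delDeg G D x = delDeg G D y ∧ delDeg G D y = delDeg G D z :=
  stmt_6_general G d v1 v2 v3 h12 h13 h23 hdeg1 hdeg2 hdeg3 hbal hv
end

section
/- Let G be a graph containing distinct vertices v1, v2 of degree 1, a vertex u of degree |V(G)| − 1, and a vertex v of degree 2 with v ∉ {v1, v2, u}. Then there exists a single vertex w whose deletion leaves v, v1, v2 all with degree 1; in particular G has an induced subgraph on |V(G)| − 1 vertices with three vertices of equal degree. -/
section

variable {V : Type*} {G : SimpleGraph V} {u v w x y : V}

lemma deg_eq_degree [Fintype V] [DecidableRel G.Adj] (v : V) : deg G v = G.degree v := by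
  rw [deg, Nat.card_eq_fintype_card, SimpleGraph.card_neighborSet_eq_degree]

lemma isUniversal_of_deg_eq_card_sub_one [Fintype V] (h : deg G u = Fintype.card V - 1) :
    G.IsUniversal u := by
  classical
  rwa [deg_eq_degree, SimpleGraph.degree_eq_card_sub_one] at h

lemma adj_iff_eq_of_deg_eq_one (h : deg G x = 1) (hxu : G.Adj x u) : G.Adj x y ↔ y = u := by
  obtain ⟨a, ha⟩ := Set.ncard_eq_one.mp h
  have hu : u ∈ G.neighborSet x := hxu
  rw [ha, Set.mem_singleton_iff] at hu
  rw [← SimpleGraph.mem_neighborSet, ha, hu, Set.mem_singleton_iff]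

lemma exists_adj_ne_of_deg_eq_two (h : deg G v = 2) (u : V) : ∃ w, G.Adj v w ∧ w ≠ u := by
  obtain ⟨a, b, hab, hN⟩ := Set.ncard_eq_two.mp h
  have ha : G.Adj v a := by simp [← SimpleGraph.mem_neighborSet, hN]
  have hb : G.Adj v b := by simp [← SimpleGraph.mem_neighborSet, hN]
  by_cases hau : a = u
  · exact ⟨b, hb, hau ▸ hab.symm⟩
  · exact ⟨a, ha, hau⟩

lemma delDeg_singleton_of_adj [Finite V] (h : G.Adj v w) : delDeg G {w} v = deg G v - 1 := by
  rw [delDeg, deg, Finset.coe_singleton, Nat.card_coe_set_eq, Nat.card_coe_set_eq,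
    Set.ncard_sdiff_singleton_of_mem (show w ∈ G.neighborSet v from h)]

lemma delDeg_singleton_of_not_adj (h : ¬G.Adj v w) : delDeg G {w} v = deg G v := by
  rw [delDeg, deg, Finset.coe_singleton,
    Set.sdiff_singleton_eq_self (show w ∉ G.neighborSet v from h)]

end

theorem stmt_13_general {V : Type*} [Fintype V] (G : SimpleGraph V) (h4 : 4 ≤ Fintype.card V)
    (v1 v2 u v : V)
    (hd1 : deg G v1 = 1) (hd2 : deg G v2 = 1)
    (hdu : deg G u = Fintype.card V - 1) (hdv : deg G v = 2)
    (hv : v ∉ ({v1, v2, u} : Set V)) :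
    ∃ w : V, w ≠ v ∧ w ≠ v1 ∧ w ≠ v2 ∧
      delDeg G {w} v = 1 ∧ delDeg G {w} v1 = 1 ∧ delDeg G {w} v2 = 1 := by
  have hvu : v ≠ u := fun h => hv (by simp [h])
  have hu := isUniversal_of_deg_eq_card_sub_one hdu
  have hu_ne_leaf : ∀ x, deg G x = 1 → u ≠ x := by
    rintro x hx rfl
    omega
  have hleaf : ∀ x, deg G x = 1 → ∀ y, G.Adj x y ↔ y = u := fun x hx _ =>
    adj_iff_eq_of_deg_eq_one hx (hu (hu_ne_leaf x hx)).symm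
  obtain ⟨w, hvw, hwu⟩ := exists_adj_ne_of_deg_eq_two hdv u
  have hw_ne_leaf : ∀ x, deg G x = 1 → w ≠ x := by
    rintro x hx rfl
    exact hvu ((hleaf w hx v).mp hvw.symm)
  have hdel_leaf : ∀ x, deg G x = 1 → delDeg G {w} x = 1 := fun x hx => by
    rw [delDeg_singleton_of_not_adj (fun h => hwu ((hleaf x hx w).mp h)), hx]
  exact ⟨w, hvw.ne.symm, hw_ne_leaf v1 hd1, hw_ne_leaf v2 hd2,
    by rw [delDeg_singleton_of_adj hvw, hdv], hdel_leaf v1 hd1, hdel_leaf v2 hd2⟩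

/-- If `v1 ≠ v2` have degree 1, `u` has degree `n - 1`, and `v ∉ {v1, v2, u}` has degree 2,
then deleting one vertex `w` leaves `v, v1, v2` all with degree 1. -/
theorem stmt_13 {V : Type*} [Fintype V] (G : SimpleGraph V) (h4 : 4 ≤ Fintype.card V)
    (v1 v2 u v : V) (h12 : v1 ≠ v2)
    (hd1 : deg G v1 = 1) (hd2 : deg G v2 = 1)
    (hdu : deg G u = Fintype.card V - 1) (hdv : deg G v = 2)
    (hv : v ∉ ({v1, v2, u} : Set V)) :
    ∃ w : V, w ≠ v ∧ w ≠ v1 ∧ w ≠ v2 ∧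
      delDeg G {w} v = 1 ∧ delDeg G {w} v1 = 1 ∧ delDeg G {w} v2 = 1 :=
  stmt_13_general G h4 v1 v2 u v hd1 hd2 hdu hdv hv
end

section
/- Let G be a graph with three distinct vertices x, y, z forming a triangle such that d(x) ≤ d(y) ≤ d(z). Then {x, y, z} is a balanceable (hence feasible) set, and consequently one can delete at most (d(z)−d(y)) + (d(y)−d(x)) + max{d(z)−d(y), d(y)−d(x)} vertices of G so that x, y, z have equal degree in the resulting induced subgraph. -/
/-!
Only vertices outside the triangle are deleted, and such a vertex lowers the degree of each of
`x, y, z` it is adjacent to. Write `p = d(z) - d(y)` and `q = d(y) - d(x)`, and sort the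
deletable neighbours of the triangle into four regions: adjacent to `y, z` only, to `z` only, to
`x, z` only and to `y` only. Since `z ∈ N(x) \ N(z)` while `x ∈ N(z) \ N(x)` cannot be deleted,
the first two regions hold at least `p + q` vertices; similarly the regions `z`-only and
`x, z`-only hold at least `p`, and `y, z`-only and `y`-only at least `q`. If the `z`-only
region has at least `p` vertices, one balances without touching `x`, deleting `p + 2q` vertices
in all; otherwise one deletes the whole `z`-only region and makes up the shortfall `s < p` with
vertices adjacent to `x` and `z`, deleting `p + q + s` vertices.
-/

open Finset

/- `yz, z, xz, y` are the sizes of the regions seen by `y, z` only, by `z` only, by `x, z` only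
and by `y` only; deleting `dyz, dz, dxz, dy` vertices from them lowers `d(x), d(y), d(z)` by
`dxz`, `dyz + dy` and `dyz + dz + dxz`. -/
lemma exists_balancing_counts_s14 {p q yz z xz y : ℕ} (hz : p + q ≤ z + yz) (hzy : p ≤ z + xz)
    (hy : q ≤ y + yz) :
    ∃ dyz dz dxz dy, dyz ≤ yz ∧ dz ≤ z ∧ dxz ≤ xz ∧ dy ≤ y ∧
      dyz + dz = p + q ∧ dyz + dy = q + dxz ∧ dxz + dy ≤ max p q := by
  rcases le_total p z with h | h
  · exact ⟨min q yz, p + q - min q yz, 0, q - min q yz, by omega, by omega, by omega, by omega,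
      by omega, by omega, by omega⟩
  · exact ⟨p + q - z, z, p - z, 0, by omega, by omega, by omega, by omega,
      by omega, by omega, by omega⟩

namespace Finset

variable {α : Type*} [DecidableEq α]

lemma card_sdiff_union_add_card_inter_sdiff (s t u : Finset α) :
    #(s \ (t ∪ u)) + #((s ∩ u) \ t) = #(s \ t) := by
  rw [sdiff_union_distrib, ← Finset.sdiff_sdiff_left', ← sdiff_inter_right_comm]
  exact card_sdiff_add_card_inter _ _

lemma card_lt_card_sdiff_add_card {s t : Finset α} {a : α} (ha : a ∈ t \ s) :
    #s < #(s \ t) + #t := by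
  rw [card_sdiff_add_card]
  exact card_lt_card ((ssubset_iff_of_subset subset_union_left).2 ⟨a, by grind⟩)

lemma card_sub_card_le_card_sdiff_union_add_card_erase {s t u : Finset α} {a b : α}
    (ha : a ∈ t \ s) (hb : b ∈ (s ∩ u) \ t) :
    #s - #t ≤ #(s \ (t ∪ u)) + #(((s ∩ u) \ t).erase b) := by
  have hlt := card_lt_card_sdiff_add_card ha
  rw [← card_sdiff_union_add_card_inter_sdiff s t u] at hlt
  rw [card_erase_of_mem hb]
  have := card_pos.2 ⟨b, hb⟩
  omega

theorem exists_balancing_deletion {X Y Z : Finset α}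
    {x y z : α} (hx : x ∈ (Y ∩ Z) \ X) (hy : y ∈ (Z ∩ X) \ Y) (hz : z ∈ (X ∩ Y) \ Z)
    (hXY : #X ≤ #Y) (hYZ : #Y ≤ #Z) :
    ∃ D : Finset α, #D ≤ (#Z - #Y) + (#Y - #X) + max (#Z - #Y) (#Y - #X) ∧
      x ∉ D ∧ y ∉ D ∧ z ∉ D ∧ #(X \ D) = #(Y \ D) ∧ #(Y \ D) = #(Z \ D) := by
  have hZX := card_sub_card_le_card_sdiff_union_add_card_erase (u := Y) (a := z) (b := x)
    (by grind) (by grind : x ∈ (Z ∩ Y) \ X)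
  have hZY := card_sub_card_le_card_sdiff_union_add_card_erase (a := z) (by grind) hy
  have hYX := card_sub_card_le_card_sdiff_union_add_card_erase (a := y) (by grind) hx
  rw [inter_comm] at hZX
  rw [union_comm] at hZY
  obtain ⟨_, _, _, _, hdyz, hdz, hdxz, hdy, hZloss, hYloss, hsize⟩ :=
    exists_balancing_counts_s14 (by omega) hZY hYX
  obtain ⟨Dyz, hDyz, rfl⟩ := exists_subset_card_eq hdyz
  obtain ⟨Dz, hDz, rfl⟩ := exists_subset_card_eq hdz
  obtain ⟨Dxz, hDxz, rfl⟩ := exists_subset_card_eq hdxz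
  obtain ⟨Dy, hDy, rfl⟩ := exists_subset_card_eq hdy
  have hDX : (Dyz ∪ Dz ∪ Dxz ∪ Dy) ∩ X = Dxz := by grind
  have hDY : (Dyz ∪ Dz ∪ Dxz ∪ Dy) ∩ Y = Dyz ∪ Dy := by grind
  have hDZ : (Dyz ∪ Dz ∪ Dxz ∪ Dy) ∩ Z = Dyz ∪ Dz ∪ Dxz := by grind
  have hY : #(Dyz ∪ Dy) = #Dyz + #Dy := card_union_of_disjoint (by grind [disjoint_left])
  have hZ : #(Dyz ∪ Dz ∪ Dxz) = #Dyz + #Dz + #Dxz := by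
    rw [card_union_of_disjoint (by grind [disjoint_left]),
      card_union_of_disjoint (by grind [disjoint_left])]
  have hD : #(Dyz ∪ Dz ∪ Dxz ∪ Dy) ≤ #Dyz + #Dz + #Dxz + #Dy := by
    grw [card_union_le, card_union_le, card_union_le]
  have hXD : #Dxz ≤ #X := card_le_card (by grind)
  have hYD : #(Dyz ∪ Dy) ≤ #Y := card_le_card (by grind)
  have hZD : #(Dyz ∪ Dz ∪ Dxz) ≤ #Z := card_le_card (by grind)
  refine ⟨Dyz ∪ Dz ∪ Dxz ∪ Dy, by omega, by grind, by grind, by grind, ?_, ?_⟩ <;>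
    rw [card_sdiff, card_sdiff] <;> simp only [hDX, hDY, hDZ] <;> omega

end Finset

namespace SimpleGraph

variable {V : Type*} [Fintype V] (G : SimpleGraph V) [DecidableRel G.Adj]

lemma deg_eq_card_neighborFinset (v : V) : deg G v = #(G.neighborFinset v) := by
  rw [deg, Nat.card_coe_set_eq, ← Set.ncard_coe_finset, coe_neighborFinset]

lemma delDeg_eq_card_neighborFinset_sdiff [DecidableEq V] (D : Finset V) (v : V) :
    delDeg G D v = #(G.neighborFinset v \ D) := by
  rw [delDeg, Nat.card_coe_set_eq, ← Set.ncard_coe_finset, coe_sdiff, coe_neighborFinset]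

end SimpleGraph

/-- A triangle `{x,y,z}` with `d(x) ≤ d(y) ≤ d(z)` is balanceable, and one can delete at most
`p + q + max{p, q}` vertices (with `p = d(z)-d(y)`, `q = d(y)-d(x)`) to equate the degrees
of `x, y, z`. -/
theorem stmt_14 {V : Type*} [Fintype V] (G : SimpleGraph V) (x y z : V)
    (hxy : G.Adj x y) (hxz : G.Adj x z) (hyz : G.Adj y z)
    (h1 : deg G x ≤ deg G y) (h2 : deg G y ≤ deg G z) :
    Balanceable G x y z ∧
    ∃ D : Finset V,
      D.card ≤ (deg G z - deg G y) + (deg G y - deg G x) +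
        max (deg G z - deg G y) (deg G y - deg G x) ∧
      x ∉ D ∧ y ∉ D ∧ z ∉ D ∧
      delDeg G D x = delDeg G D y ∧ delDeg G D y = delDeg G D z := by
  classical
  refine ⟨Or.inr (Or.inl ⟨hxy, hxz, hyz⟩), ?_⟩
  simp only [G.deg_eq_card_neighborFinset, G.delDeg_eq_card_neighborFinset_sdiff] at h1 h2 ⊢
  exact exists_balancing_deletion (by simp [hxy.symm, hxz.symm]) (by simp [hyz.symm, hxy])
    (by simp [hxz, hyz]) h1 h2
end

section
/- Let G be an n-vertex graph with repetition number exactly 2 in which every vertex has positive degree, and let S ⊆ {1,…,n−1} be the degrees achieved exactly twice and T ⊆ {1,…,n−1} the degrees achieved by no vertex. Suppose there is an injective map assigning to each maximal arithmetic progression of common difference 2 contained in S of length ≥ 2, say {d, d+2, …, d+2j}, the set {d−1, d+1, …, d+2j+1} ⊆ T (mod n−1), and to the remaining elements of S (paired by the relation d, d+1 ∈ S or singletons) disjoint nonempty subsets of T. Then |T| ≥ |S|, contradicting |T| = |S| − 1; hence no such graph exists in which Claims 3–5 all hold. -/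
/-- Representative of `k` modulo `n-1` lying in `{1, ..., n-1}`. -/
def wrap (n k : ℕ) : ℕ := (k - 1) % (n - 1) + 1

open Finset

section Wrap

variable {n a b : ℕ}

lemma wrap_mem_Icc (hn : 2 ≤ n) (k : ℕ) : wrap n k ∈ Icc 1 (n - 1) := by
  have := Nat.mod_lt (k - 1) (show 0 < n - 1 by omega)
  simp only [wrap, mem_Icc]
  omega

lemma wrap_of_mem_Icc (ha : a ∈ Icc 1 (n - 1)) : wrap n a = a := by
  rw [mem_Icc] at ha
  rw [wrap, Nat.mod_eq_of_lt (by omega)]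
  omega

lemma wrap_eq_wrap_iff (ha : 1 ≤ a) (hb : 1 ≤ b) : wrap n a = wrap n b ↔ a ≡ b [MOD n - 1] := by
  rw [wrap, wrap, add_left_inj, ← Nat.ModEq]
  constructor
  · intro h
    simpa [Nat.sub_add_cancel ha, Nat.sub_add_cancel hb] using h.add_right 1
  · intro h
    exact Nat.ModEq.add_right_cancel' 1 (by rwa [Nat.sub_add_cancel ha, Nat.sub_add_cancel hb])

lemma eq_of_wrap_add_eq (ha : a ∈ Icc 1 (n - 1)) (hb : b ∈ Icc 1 (n - 1)) {k : ℕ}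
    (h : wrap n (a + k) = wrap n (b + k)) : a = b := by
  have ha1 := (mem_Icc.mp ha).1
  have hb1 := (mem_Icc.mp hb).1
  rw [wrap_eq_wrap_iff (by omega) (by omega)] at h
  rw [← wrap_of_mem_Icc ha, ← wrap_of_mem_Icc hb, wrap_eq_wrap_iff ha1 hb1]
  exact Nat.ModEq.add_right_cancel' k h

lemma wrap_add_two_of_wrap_add_one_eq (hn : 2 ≤ n) (ha : a ∈ Icc 1 (n - 1)) (hb : 1 ≤ b)
    (h : wrap n (b + 1) = wrap n (a + n - 2)) : wrap n (b + 2) = a := by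
  have ha1 := (mem_Icc.mp ha).1
  rw [wrap_eq_wrap_iff (by omega) (by omega)] at h
  rw [← wrap_of_mem_Icc ha, wrap_eq_wrap_iff (by omega) ha1]
  calc b + 2 ≡ a + n - 2 + 1 [MOD n - 1] := h.add_right 1
    _ = a + (n - 1) := by omega
    _ ≡ a [MOD n - 1] := Nat.add_modulus_modEq_iff.mpr rfl

end Wrap

lemma card_add_card_filter_fiber_eq_zero {α β : Type*} [Fintype α] [DecidableEq β] (f : α → β)
    (t : Finset β) (hf : ∀ a, f a ∈ t) (hle : ∀ b, Nat.card {a // f a = b} ≤ 2) :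
    Fintype.card α + #{b ∈ t | Nat.card {a // f a = b} = 0} =
      #t + #{b ∈ t | Nat.card {a // f a = b} = 2} := by
  classical
  have hfiber : ∀ b, Nat.card {a // f a = b} = #{a | f a = b} := fun b => by
    rw [Nat.card_eq_fintype_card, Fintype.card_subtype]
  have hsum : ∑ b ∈ t, Nat.card {a // f a = b} = Fintype.card α := by
    rw [← card_univ, card_eq_sum_card_fiberwise (t := t) fun a _ => hf a]
    exact sum_congr rfl fun b _ => hfiber b
  have hpoint : ∀ b ∈ t, Nat.card {a // f a = b} + (if Nat.card {a // f a = b} = 0 then 1 else 0)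
      = 1 + (if Nat.card {a // f a = b} = 2 then 1 else 0) := fun b _ => by
    have := hle b
    split_ifs <;> omega
  have := sum_congr rfl hpoint
  rwa [sum_add_distrib, sum_add_distrib, hsum, ← card_filter, ← card_filter, sum_const,
    smul_eq_mul, mul_one] at this

lemma card_filter_eq_two_le_card_filter_eq_zero (c : ℕ → ℕ) {n : ℕ} (hn : 2 ≤ n)
    (hmiss : ∀ d ∈ Icc 1 (n - 1), c d = 2 → c (wrap n (d + n - 2)) = 0 ∨ c (wrap n (d + 1)) = 0)
    (hgap : ∀ d ∈ Icc 1 (n - 1), c d = 2 → c (wrap n (d + 2)) = 2 → c (wrap n (d + n - 2)) = 0) :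
    #{d ∈ Icc 1 (n - 1) | c d = 2} ≤ #{d ∈ Icc 1 (n - 1) | c d = 0} := by
  let φ : ℕ → ℕ := fun d =>
    if c (wrap n (d + n - 2)) = 0 then wrap n (d + n - 2) else wrap n (d + 1)
  have hsub : ∀ d, d + n - 2 = d + (n - 2) := fun d => by omega
  refine card_le_card_of_injOn φ (fun d hd => ?_) (fun a ha b hb hab => ?_)
  · rw [mem_coe, mem_filter] at hd
    simp only [φ, mem_coe, mem_filter]
    split_ifs with h
    · exact ⟨wrap_mem_Icc hn _, h⟩
    · exact ⟨wrap_mem_Icc hn _, (hmiss d hd.1 hd.2).resolve_left h⟩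
  · rw [mem_coe, mem_filter] at ha hb
    have ha1 := (mem_Icc.mp ha.1).1
    have hb1 := (mem_Icc.mp hb.1).1
    simp only [φ] at hab
    split_ifs at hab with hca hcb hcb
    · rw [hsub, hsub] at hab
      exact eq_of_wrap_add_eq ha.1 hb.1 hab
    · have hba := wrap_add_two_of_wrap_add_one_eq hn ha.1 hb1 hab.symm
      exact absurd (hgap b hb.1 hb.2 (hba ▸ ha.2)) hcb
    · have hab' := wrap_add_two_of_wrap_add_one_eq hn hb.1 ha1 hab
      exact absurd (hgap a ha.1 ha.2 (hab' ▸ hb.2)) hca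
    · exact eq_of_wrap_add_eq ha.1 hb.1 hab

lemma deg_lt_card {V : Type*} [Fintype V] (G : SimpleGraph V) (v : V) :
    deg G v < Fintype.card V := by
  classical
  rw [deg, Nat.card_eq_fintype_card, SimpleGraph.card_neighborSet_eq_degree]
  exact G.degree_lt_card_verts v

theorem stmt_19_general {V : Type*} [Fintype V] (G : SimpleGraph V)
    (hrep2a : ∀ e : ℕ, Nat.card {v : V // deg G v = e} ≤ 2)
    (hrep2b : ∃ e : ℕ, Nat.card {v : V // deg G v = e} = 2)
    (hiso : ∀ v : V, 0 < deg G v)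
    (claim3 : ∀ d ∈ Finset.Icc 1 (Fintype.card V - 1),
      Nat.card {v : V // deg G v = d} = 2 →
        Nat.card {v : V // deg G v = wrap (Fintype.card V) (d + Fintype.card V - 2)} = 0 ∨
        Nat.card {v : V // deg G v = wrap (Fintype.card V) (d + 1)} = 0)
    (claim5 : ∀ d ∈ Finset.Icc 1 (Fintype.card V - 1),
      Nat.card {v : V // deg G v = d} = 2 →
      Nat.card {v : V // deg G v = wrap (Fintype.card V) (d + 2)} = 2 →
        Nat.card {v : V // deg G v = wrap (Fintype.card V) (d + Fintype.card V - 2)} = 0 ∧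
        Nat.card {v : V // deg G v = wrap (Fintype.card V) (d + 1)} = 0 ∧
        Nat.card {v : V // deg G v = wrap (Fintype.card V) (d + 3)} = 0) :
    False := by
  obtain ⟨e, he⟩ := hrep2b
  obtain ⟨⟨v, -⟩⟩ : Nonempty {v : V // deg G v = e} := Nat.card_pos_iff.mp (by omega) |>.1
  have hn : 2 ≤ Fintype.card V := by linarith [hiso v, deg_lt_card G v]
  have hcount := card_add_card_filter_fiber_eq_zero (deg G) (Icc 1 (Fintype.card V - 1))
    (fun w => mem_Icc.mpr ⟨hiso w, Nat.le_sub_one_of_lt (deg_lt_card G w)⟩) hrep2a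
  have hdoubled_le_missing := card_filter_eq_two_le_card_filter_eq_zero (fun d => Nat.card {v // deg G v = d})
    hn claim3 fun d hd h2 h2' => (claim5 d hd h2 h2').1
  rw [Nat.card_Icc] at hcount
  omega

/-- Final counting contradiction: there is no graph with repetition number exactly 2, all
degrees positive, in which Claims 3–5 (on missing degree values, mod `n-1` in `[n-1]`)
all hold. -/
theorem stmt_19 {V : Type*} [Fintype V] (G : SimpleGraph V)
    (hrep2a : ∀ e : ℕ, Nat.card {v : V // deg G v = e} ≤ 2)
    (hrep2b : ∃ e : ℕ, Nat.card {v : V // deg G v = e} = 2)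
    (hiso : ∀ v : V, 0 < deg G v)
    (claim3 : ∀ d ∈ Finset.Icc 1 (Fintype.card V - 1),
      Nat.card {v : V // deg G v = d} = 2 →
        Nat.card {v : V // deg G v = wrap (Fintype.card V) (d + Fintype.card V - 2)} = 0 ∨
        Nat.card {v : V // deg G v = wrap (Fintype.card V) (d + 1)} = 0)
    (claim4 : ∀ d ∈ Finset.Icc 1 (Fintype.card V - 1),
      Nat.card {v : V // deg G v = d} = 2 →
      Nat.card {v : V // deg G v = wrap (Fintype.card V) (d + 1)} = 2 →
        Nat.card {v : V // deg G v = wrap (Fintype.card V) (d + Fintype.card V - 2)} = 0 ∧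
        Nat.card {v : V // deg G v = wrap (Fintype.card V) (d + 2)} = 0)
    (claim5 : ∀ d ∈ Finset.Icc 1 (Fintype.card V - 1),
      Nat.card {v : V // deg G v = d} = 2 →
      Nat.card {v : V // deg G v = wrap (Fintype.card V) (d + 2)} = 2 →
        Nat.card {v : V // deg G v = wrap (Fintype.card V) (d + Fintype.card V - 2)} = 0 ∧
        Nat.card {v : V // deg G v = wrap (Fintype.card V) (d + 1)} = 0 ∧
        Nat.card {v : V // deg G v = wrap (Fintype.card V) (d + 3)} = 0) :
    False :=
  stmt_19_general G hrep2a hrep2b hiso claim3 claim5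
end
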